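/- Let D(z) = Σ d(n)·zⁿ be an aperiodic power series with nonnegative coefficients converging at ρ_p > 0, with D(ρ_p) = 1. Then for 0 < θ < 2π, |D(ρ_p·e^{iθ})| < 1, and hence 1 − D(ρ_p·e^{iθ}) ≠ 0; i.e. the only zero of 1 − D(z) on the circle |z| = ρ_p is z = ρ_p itself. -/

import Mathlib

open Complex Real

/-!
Write `z = ρ u` with `u = e^{iθ}` on the unit circle, so that the terms `d n zⁿ` have norms
`d n ρⁿ` summing to `D(ρ) = 1`. The triangle inequality for the series is strict as soon as two
nonzero terms point in different directions, i.e. as soon as `uⁱ ≠ uᵐ` for two indices with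
`d i, d m ≠ 0`. If `u^{j-i} = u^{k-i} = 1` with `gcd(j - i, k - i) = 1`, then `u = 1`, which
`0 < θ < 2π` excludes.
-/

theorem norm_tsum_lt_tsum_norm_of_not_sameRay {ι E : Type*} [NormedAddCommGroup E]
    [NormedSpace ℝ E] [StrictConvexSpace ℝ E] [CompleteSpace E] {f : ι → E}
    (hf : Summable fun n => ‖f n‖) {a b : ι} (hab : a ≠ b) (h : ¬SameRay ℝ (f a) (f b)) :
    ‖∑' n, f n‖ < ∑' n, ‖f n‖ := by
  classical
  set s : Finset ι := {a, b}
  have hrest : ‖∑' n : ↑(↑s : Set ι)ᶜ, f n‖ ≤ ∑' n : ↑(↑s : Set ι)ᶜ, ‖f n‖ :=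
    norm_tsum_le_tsum_norm (hf.subtype _)
  calc ‖∑' n, f n‖ = ‖f a + f b + ∑' n : ↑(↑s : Set ι)ᶜ, f n‖ := by
        rw [← Finset.sum_pair hab, (hf.of_norm).sum_add_tsum_compl]
    _ ≤ ‖f a + f b‖ + ∑' n : ↑(↑s : Set ι)ᶜ, ‖f n‖ := (norm_add_le _ _).trans (by gcongr)
    _ < ‖f a‖ + ‖f b‖ + ∑' n : ↑(↑s : Set ι)ᶜ, ‖f n‖ := by
        gcongr; exact norm_add_lt_of_not_sameRay h
    _ = ∑' n, ‖f n‖ := by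
        rw [← Finset.sum_pair (f := fun n => ‖f n‖) hab, hf.sum_add_tsum_compl]

theorem not_sameRay_pos_smul_of_norm_eq_of_ne {E : Type*} [NormedAddCommGroup E]
    [NormedSpace ℝ E] {x y : E} {r s : ℝ} (hr : 0 < r) (hs : 0 < s) (hxy : ‖x‖ = ‖y‖)
    (hne : x ≠ y) : ¬SameRay ℝ (r • x) (s • y) := by
  intro h
  have := (h.pos_smul_left (inv_pos.2 hr)).pos_smul_right (inv_pos.2 hs)
  rw [smul_smul, smul_smul, inv_mul_cancel₀ hr.ne', inv_mul_cancel₀ hs.ne', one_smul,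
    one_smul] at this
  exact hne (this.eq_of_norm_eq hxy)

theorem Circle.exp_ne_one_of_pos_of_lt_two_pi {θ : ℝ} (h₀ : 0 < θ) (h₂ : θ < 2 * π) :
    Circle.exp θ ≠ 1 := by
  rw [Ne, Circle.exp_eq_one]
  rintro ⟨n, rfl⟩
  have h1 : 0 < n := by exact_mod_cast pos_of_mul_pos_left h₀ (by positivity)
  have h2 : n < 1 := by exact_mod_cast (show (n : ℝ) < 1 by nlinarith [pi_pos])
  omega

theorem exists_pow_ne_pow_of_coprime_sub {G : Type*} [Group G] {x : G} (hx : x ≠ 1)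
    {i j k : ℕ} (hij : i ≤ j) (hik : i ≤ k) (h : Nat.Coprime (j - i) (k - i)) :
    ∃ m ∈ ({j, k} : Set ℕ), x ^ i ≠ x ^ m := by
  have : x ^ (j - i) ≠ 1 ∨ x ^ (k - i) ≠ 1 := by
    rw [← not_and_or, pow_eq_one_iff_of_coprime h]; exact hx
  rcases this with hj | hk
  · exact ⟨j, by simp, fun he => hj (by rw [pow_sub x hij, he, mul_inv_cancel])⟩
  · exact ⟨k, by simp, fun he => hk (by rw [pow_sub x hik, he, mul_inv_cancel])⟩

theorem norm_tsum_mul_pow_lt_of_pow_ne {d : ℕ → ℝ} (hd : ∀ n, 0 ≤ d n) {ρ : ℝ} (hρ : 0 < ρ)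
    (hconv : Summable fun n => d n * ρ ^ n) {u : Circle} {a b : ℕ} (ha : d a ≠ 0)
    (hb : d b ≠ 0) (hab : u ^ a ≠ u ^ b) :
    ‖∑' n, (d n : ℂ) * (ρ * u) ^ n‖ < ∑' n, d n * ρ ^ n := by
  have hterm : ∀ n, (d n : ℂ) * (ρ * u) ^ n = (d n * ρ ^ n) • (↑(u ^ n) : ℂ) := by
    intro n
    simp only [mul_pow, Circle.coe_pow, real_smul, ofReal_mul, ofReal_pow]
    ring
  have hnorm : ∀ n, ‖(d n : ℂ) * (ρ * u) ^ n‖ = d n * ρ ^ n := by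
    intro n
    rw [hterm, norm_smul, Circle.norm_coe, mul_one,
      Real.norm_of_nonneg (mul_nonneg (hd n) (pow_nonneg hρ.le n))]
  simp_rw [← hnorm] at hconv ⊢
  refine norm_tsum_lt_tsum_norm_of_not_sameRay hconv (a := a) (b := b)
    (by rintro rfl; exact hab rfl) ?_
  rw [hterm, hterm]
  refine not_sameRay_pos_smul_of_norm_eq_of_ne ?_ ?_ (by simp only [Circle.norm_coe])
    (Circle.coe_injective.ne hab)
  · exact mul_pos ((hd a).lt_of_ne' ha) (pow_pos hρ a)
  · exact mul_pos ((hd b).lt_of_ne' hb) (pow_pos hρ b)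

/-- Uniqueness of the dominant singularity: for an aperiodic power series `D` with
nonnegative coefficients and `D(ρ_p) = 1`, we have `|D(ρ_p e^{iθ})| < 1` for
`0 < θ < 2π`, hence `1 - D(ρ_p e^{iθ}) ≠ 0`. -/
theorem stmt14 (d : ℕ → ℝ) (hd : ∀ n, 0 ≤ d n) (ρp : ℝ) (hρ : 0 < ρp)
    (hconv : Summable fun n => d n * ρp ^ n)
    (i j k : ℕ) (hij : i < j) (hjk : j < k)
    (haper : d i * d j * d k ≠ 0 ∧ Nat.gcd (j - i) (k - i) = 1)
    (hval : ∑' n, d n * ρp ^ n = 1) :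
    ∀ θ : ℝ, 0 < θ → θ < 2 * Real.pi →
      ‖∑' n, (d n : ℂ) * (ρp * Complex.exp (θ * Complex.I)) ^ n‖ < 1 ∧
      1 - ∑' n, (d n : ℂ) * (ρp * Complex.exp (θ * Complex.I)) ^ n ≠ 0 := by
  intro θ hθ₀ hθ₂
  obtain ⟨hdijk, hcop⟩ := haper
  simp only [mul_ne_zero_iff] at hdijk
  obtain ⟨⟨hdi, hdj⟩, hdk⟩ := hdijk
  obtain ⟨m, hm, hne⟩ := exists_pow_ne_pow_of_coprime_sub
    (Circle.exp_ne_one_of_pos_of_lt_two_pi hθ₀ hθ₂) hij.le (hij.trans hjk).le hcop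
  have hdm : d m ≠ 0 := by rcases hm with rfl | rfl <;> assumption
  have hlt := norm_tsum_mul_pow_lt_of_pow_ne hd hρ hconv hdi hdm hne
  rw [Circle.coe_exp, hval] at hlt
  refine ⟨hlt, fun h => hlt.ne ?_⟩
  rw [← sub_eq_zero.1 h, norm_one]
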